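/- Let n ≥ 1 and let A be a commutative ℚ-algebra. The additive map res : Lⁿ(A) → A, f ↦ coeff_{(−1,…,−1)}(f), is surjective, and its kernel is exactly the set of all sums Σ_{j=1}^n ∂hⱼ/∂tⱼ with h₁, …, hₙ ∈ Lⁿ(A). (Equivalently, the residue induces an isomorphism Ω̃ⁿ/dΩ̃ⁿ⁻¹ ≅ A for continuous differential forms of iterated Laurent series.) -/

import Mathlib

noncomputable section

open scoped Classical TensorProduct

/-- Iterated Laurent series carrier together with its ring structure. -/
def IterAux (A : Type) [CommRing A] : ℕ → (T : Type) × CommRing T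
  | 0 => ⟨A, inferInstance⟩
  | n+1 =>
    letI := (IterAux A n).2
    ⟨LaurentSeries (IterAux A n).1, inferInstance⟩

/-- `IterLaurent A n = A((t₁))…((tₙ))`, the ring of iterated Laurent series:
`IterLaurent A 0 = A` and `IterLaurent A (n+1) = (IterLaurent A n)((t_{n+1}))`. -/
def IterLaurent (A : Type) [CommRing A] (n : ℕ) : Type := (IterAux A n).1

instance iterLaurentCommRing (A : Type) [CommRing A] (n : ℕ) : CommRing (IterLaurent A n) :=
  (IterAux A n).2

/-- View an iterated Laurent series as a Laurent series over the previous stage. -/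
def IterLaurent.down {A : Type} [CommRing A] {n : ℕ} (f : IterLaurent A (n+1)) :
    LaurentSeries (IterLaurent A n) := f

/-- View a Laurent series over the previous stage as an iterated Laurent series. -/
def IterLaurent.up {A : Type} [CommRing A] {n : ℕ} (f : LaurentSeries (IterLaurent A n)) :
    IterLaurent A (n+1) := f

/-- The coefficient of `t^l = t₁^{l₁}⋯tₙ^{lₙ}` in an iterated Laurent series. -/
def iterCoeff (A : Type) [CommRing A] : {n : ℕ} → IterLaurent A n → (Fin n → ℤ) → A
  | 0, f, _ => f
  | n+1, f, l => iterCoeff A (f.down.coeff (l (Fin.last n))) (fun i => l i.castSucc)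

/-- The lexicographic order on `ℤⁿ` "from the last coordinate":
`l < l'` iff `lₙ < l'ₙ`, or `lₙ = l'ₙ` and `(l₁,…,l_{n-1}) < (l'₁,…,l'_{n-1})`. -/
def lexLt : {n : ℕ} → (Fin n → ℤ) → (Fin n → ℤ) → Prop
  | 0, _, _ => False
  | n+1, a, b => a (Fin.last n) < b (Fin.last n) ∨
      (a (Fin.last n) = b (Fin.last n) ∧
        lexLt (fun i => a i.castSucc) (fun i => b i.castSucc))

/-- The monomial `t^l = t₁^{l₁} ⋯ tₙ^{lₙ}`. -/
def tpow (A : Type) [CommRing A] : {n : ℕ} → (Fin n → ℤ) → IterLaurent A n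
  | 0, _ => 1
  | n+1, l => IterLaurent.up
      (HahnSeries.single (l (Fin.last n)) (tpow A (fun i => l i.castSucc)))

/-- Constant series, as a ring homomorphism `A →+* A((t₁))…((tₙ))`. -/
def iterC (A : Type) [CommRing A] : (n : ℕ) → A →+* IterLaurent A n
  | 0 => RingHom.id A
  | n+1 => (HahnSeries.C : (IterLaurent A n) →+* LaurentSeries (IterLaurent A n)).comp (iterC A n)

/-- The truncation `f₋ = Σ_{l<0} coeff_l(f) t^l` (strictly negative part w.r.t. the
lexicographic order from the last coordinate). -/
def truncNeg (A : Type) [CommRing A] : {n : ℕ} → IterLaurent A n → IterLaurent A n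
  | 0, _ => 0
  | n+1, f => IterLaurent.up
      { coeff := fun k =>
          if k < 0 then f.down.coeff k else if k = 0 then truncNeg A (f.down.coeff 0) else 0
        isPWO_support' := by
          refine (f.down.isPWO_support.union (Set.finite_singleton 0).isPWO).mono ?_
          intro k hk
          simp only [Function.mem_support] at hk
          rcases lt_trichotomy k 0 with h | h | h
          · left
            simp only [if_pos h] at hk
            exact hk
          · right; simp [h]
          · exfalso; apply hk; rw [if_neg (not_lt.2 h.le), if_neg h.ne'] }

/-- The truncation `f_{≤0} = Σ_{l≤0} coeff_l(f) t^l` (nonpositive part). -/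
def truncNonpos (A : Type) [CommRing A] : {n : ℕ} → IterLaurent A n → IterLaurent A n
  | 0, f => f
  | n+1, f => IterLaurent.up
      { coeff := fun k =>
          if k < 0 then f.down.coeff k else if k = 0 then truncNonpos A (f.down.coeff 0) else 0
        isPWO_support' := by
          refine (f.down.isPWO_support.union (Set.finite_singleton 0).isPWO).mono ?_
          intro k hk
          simp only [Function.mem_support] at hk
          rcases lt_trichotomy k 0 with h | h | h
          · left
            simp only [if_pos h] at hk
            exact hk
          · right; simp [h]
          · exfalso; apply hk; rw [if_neg (not_lt.2 h.le), if_neg h.ne'] }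

/-- `V₊(A)`: iterated Laurent series with constant term `1` and no nonzero
coefficients below `0`. -/
def MemVplus (A : Type) [CommRing A] {n : ℕ} (f : IterLaurent A n) : Prop :=
  iterCoeff A f 0 = 1 ∧ ∀ l, lexLt l 0 → iterCoeff A f l = 0

/-- `V₋(A)`: iterated Laurent series with constant term `1`, no nonzero coefficients
above `0`, and `f - 1` nilpotent in `Lⁿ(A)`. -/
def MemVminus (A : Type) [CommRing A] {n : ℕ} (f : IterLaurent A n) : Prop :=
  iterCoeff A f 0 = 1 ∧ (∀ l, lexLt 0 l → iterCoeff A f l = 0) ∧ IsNilpotent (f - 1)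

/-- `(Lⁿ𝔾ₘ)⁰(A)`: invertible constant term and nilpotent strictly negative part. -/
def MemZeroMul (A : Type) [CommRing A] {n : ℕ} (f : IterLaurent A n) : Prop :=
  IsUnit (iterCoeff A f 0) ∧ IsNilpotent (truncNeg A f)

/-- `(Lⁿ𝔾ₘ)^♯(A)`: constant term `1 + nilpotent` and nilpotent strictly negative part. -/
def MemSharpMul (A : Type) [CommRing A] {n : ℕ} (f : IterLaurent A n) : Prop :=
  IsNilpotent (iterCoeff A f 0 - 1) ∧ IsNilpotent (truncNeg A f)

/-- `(Lⁿ𝔾ₐ)^♯(A)`: nilpotent nonpositive part. -/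
def MemSharpAdd (A : Type) [CommRing A] {n : ℕ} (g : IterLaurent A n) : Prop :=
  IsNilpotent (truncNonpos A g)

/-- The residue: the coefficient of `t₁⁻¹⋯tₙ⁻¹`. -/
def iterRes (A : Type) [CommRing A] {n : ℕ} (f : IterLaurent A n) : A :=
  iterCoeff A f (fun _ => -1)

/-- The derivative with respect to the outer Laurent variable:
`coeff k ↦ (k+1) • coeff (k+1)`. -/
def hahnDerivHom (B : Type) [CommRing B] : LaurentSeries B →+ LaurentSeries B where
  toFun f :=
    { coeff := fun k => (k + 1) • f.coeff (k + 1)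
      isPWO_support' := by
        have himg : (Function.support fun k : ℤ => (k + 1) • f.coeff (k + 1)) ⊆
            (fun k : ℤ => k - 1) '' f.support := by
          intro k hk
          simp only [Function.mem_support] at hk
          refine ⟨k + 1, ?_, by ring⟩
          intro h0
          apply hk
          rw [h0, smul_zero]
        exact (f.isPWO_support.image_of_monotone (fun a b hab => by omega)).mono himg }
  map_zero' := by ext k; simp
  map_add' f g := by ext k; simp [smul_add]

/-- Coefficientwise application of an additive map, on Laurent series. -/
def hahnMapHom {B C : Type} [CommRing B] [CommRing C] (φ : B →+ C) :
    HahnSeries ℤ B →+ HahnSeries ℤ C where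
  toFun f := f.map φ
  map_zero' := by ext; simp
  map_add' f g := by ext; simp

/-- The formal partial derivative `∂/∂tⱼ` as an additive map: it is characterized by
`coeff_l (∂f/∂tⱼ) = (lⱼ + 1) • coeff_{l + eⱼ} f`. -/
def pderivHom (A : Type) [CommRing A] : {n : ℕ} → Fin n → (IterLaurent A n →+ IterLaurent A n)
  | 0, j => j.elim0
  | n+1, j =>
    show HahnSeries ℤ (IterLaurent A n) →+ HahnSeries ℤ (IterLaurent A n) from
    if h : (j : ℕ) < n then
      hahnMapHom (B := IterLaurent A n) (C := IterLaurent A n) (pderivHom A (⟨j, h⟩ : Fin n))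
    else hahnDerivHom (IterLaurent A n)

/-- The formal partial derivative `∂f/∂tⱼ` of an iterated Laurent series. -/
def pderivIter (A : Type) [CommRing A] {n : ℕ} (j : Fin n) (f : IterLaurent A n) :
    IterLaurent A n := pderivHom A j f

/-- Coefficientwise application of a ring homomorphism, on Laurent series. -/
def hahnMapRingHom {B C : Type} [CommRing B] [CommRing C] (φ : B →+* C) :
    HahnSeries ℤ B →+* HahnSeries ℤ C where
  toFun f := f.map φ
  map_one' := by
    ext g
    by_cases h : g = 0 <;> simp [h]
  map_mul' x y := by
    have h := HahnSeries.map_mul (Γ := ℤ) (f := (φ : B →ₙ+* C)) (x := x) (y := y)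
    ext g
    have := congrArg (fun z : HahnSeries ℤ C => z.coeff g) h
    exact this
  map_zero' := by ext; simp
  map_add' x y := by ext; simp

/-- The ring homomorphism `Lⁿ(A) →+* Lⁿ(B)` induced by `σ : A →+* B`
(functoriality of iterated Laurent series). -/
def iterMap {A B : Type} [CommRing A] [CommRing B] (σ : A →+* B) :
    (n : ℕ) → (IterLaurent A n →+* IterLaurent B n)
  | 0 => σ
  | n+1 =>
    show HahnSeries ℤ (IterLaurent A n) →+* HahnSeries ℤ (IterLaurent B n) from
    hahnMapRingHom (B := IterLaurent A n) (C := IterLaurent B n) (iterMap σ n)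

theorem tpow_zero (A : Type) [CommRing A] : ∀ {n : ℕ}, tpow A (0 : Fin n → ℤ) = 1
  | 0 => rfl
  | n+1 => by
    show IterLaurent.up (HahnSeries.single ((0 : Fin (n+1) → ℤ) (Fin.last n))
      (tpow A fun i => (0 : Fin (n+1) → ℤ) i.castSucc)) = 1
    have h1 : (fun i : Fin n => (0 : Fin (n+1) → ℤ) i.castSucc) = (0 : Fin n → ℤ) := rfl
    rw [h1, tpow_zero A]
    exact congrArg IterLaurent.up (HahnSeries.single_zero_one)

theorem tpow_mul_tpow (A : Type) [CommRing A] :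
    ∀ {n : ℕ} (l l' : Fin n → ℤ), tpow A l * tpow A l' = tpow A (l + l')
  | 0, _, _ => one_mul 1
  | n+1, l, l' => by
    show IterLaurent.up (HahnSeries.single (l (Fin.last n)) (tpow A fun i => l i.castSucc) *
        HahnSeries.single (l' (Fin.last n)) (tpow A fun i => l' i.castSucc)) = _
    rw [HahnSeries.single_mul_single, tpow_mul_tpow A]
    rfl

/-- The variable `tᵢ` as a unit of `Lⁿ(A)`. -/
def tUnit (A : Type) [CommRing A] (n : ℕ) (i : Fin n) : (IterLaurent A n)ˣ where
  val := tpow A (fun j => if j = i then 1 else 0)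
  inv := tpow A (fun j => if j = i then -1 else 0)
  val_inv := by
    rw [tpow_mul_tpow A]
    have : ((fun j : Fin n => if j = i then (1:ℤ) else 0) + fun j => if j = i then -1 else 0)
        = 0 := by funext j; by_cases h : j = i <;> simp [h]
    rw [this, tpow_zero A]
  inv_val := by
    rw [tpow_mul_tpow A]
    have : ((fun j : Fin n => if j = i then (-1:ℤ) else 0) + fun j => if j = i then 1 else 0)
        = 0 := by funext j; by_cases h : j = i <;> simp [h]
    rw [this, tpow_zero A]

/-- A unit of `A` as a constant unit of `Lⁿ(A)`. -/
def constUnit (A : Type) [CommRing A] (n : ℕ) (a : Aˣ) : (IterLaurent A n)ˣ :=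
  Units.map (iterC A n).toMonoidHom a

/-!
Write `f ∈ Lⁿ⁺¹(A)` as a Laurent series `Σₖ fₖ tₙ₊₁ᵏ` with `fₖ ∈ Lⁿ(A)`; then `res f = res f₋₁`.
A derivative `∂/∂tⱼ` acts coefficientwise for `j ≤ n` and kills the `tₙ₊₁⁻¹` term for
`j = n + 1`, so residues of derivatives vanish by induction on `n`. Conversely, if `res f = 0`
then `f₋₁` is a sum of derivatives in `t₁, …, tₙ` by induction, and `f - f₋₁ tₙ₊₁⁻¹` is the
`tₙ₊₁`-derivative of its termwise antiderivative, which exists because `A` is a `ℚ`-algebra.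
-/

namespace IterLaurent

variable {A : Type} [CommRing A]

def downEquiv (n : ℕ) : IterLaurent A (n+1) ≃+* LaurentSeries (IterLaurent A n) where
  toFun := down
  invFun := up
  left_inv _ := rfl
  right_inv _ := rfl
  map_mul' _ _ := rfl
  map_add' _ _ := rfl

lemma downEquiv_apply {n : ℕ} (f : IterLaurent A (n+1)) : downEquiv n f = f.down := rfl

lemma down_up {n : ℕ} (f : LaurentSeries (IterLaurent A n)) : (up f).down = f := rfl

end IterLaurent

open IterLaurent

section Residue

variable {A : Type} [CommRing A]

lemma iterCoeff_succ {n : ℕ} (f : IterLaurent A (n+1)) (l : Fin (n+1) → ℤ) :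
    iterCoeff A f l = iterCoeff A (f.down.coeff (l (Fin.last n))) (fun i => l i.castSucc) :=
  rfl

def iterCoeffAddHom : {n : ℕ} → (Fin n → ℤ) → IterLaurent A n →+ A
  | 0, _ => AddMonoidHom.id A
  | n+1, l => (iterCoeffAddHom (fun i => l i.castSucc)).comp
      ((HahnSeries.coeff.addMonoidHom (l (Fin.last n))).comp (downEquiv n).toAddMonoidHom)

lemma iterCoeffAddHom_apply : ∀ {n : ℕ} (l : Fin n → ℤ) (f : IterLaurent A n),
    iterCoeffAddHom l f = iterCoeff A f l
  | 0, _, _ => rfl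
  | n+1, l, f => iterCoeffAddHom_apply (fun i => l i.castSucc) (f.down.coeff (l (Fin.last n)))

lemma iterCoeff_zero {n : ℕ} (l : Fin n → ℤ) : iterCoeff A (0 : IterLaurent A n) l = 0 := by
  rw [← iterCoeffAddHom_apply, map_zero]

lemma iterRes_sum {n : ℕ} {ι : Type} (s : Finset ι) (f : ι → IterLaurent A n) :
    iterRes A (∑ i ∈ s, f i) = ∑ i ∈ s, iterRes A (f i) := by
  simp only [iterRes, ← iterCoeffAddHom_apply, map_sum]

lemma iterRes_succ {n : ℕ} (f : IterLaurent A (n+1)) :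
    iterRes A f = iterRes A (f.down.coeff (-1)) := rfl

def iterSingle : {n : ℕ} → (Fin n → ℤ) → A → IterLaurent A n
  | 0, _, a => a
  | _+1, l, a => up (HahnSeries.single (l (Fin.last _)) (iterSingle (fun i => l i.castSucc) a))

lemma iterCoeff_iterSingle_self : ∀ {n : ℕ} (l : Fin n → ℤ) (a : A),
    iterCoeff A (iterSingle l a) l = a
  | 0, _, _ => rfl
  | n+1, l, a => by
    rw [iterCoeff_succ, iterSingle, down_up, HahnSeries.coeff_single_same]
    exact iterCoeff_iterSingle_self _ a

lemma iterRes_surjective (n : ℕ) : Function.Surjective (iterRes A : IterLaurent A n → A) :=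
  fun a => ⟨iterSingle (fun _ => -1) a, iterCoeff_iterSingle_self _ a⟩

end Residue

section Derivative

variable {A : Type} [CommRing A]

lemma down_pderivIter_castSucc {n : ℕ} (j : Fin n) (f : IterLaurent A (n+1)) :
    (pderivIter A j.castSucc f).down = f.down.map (pderivHom A j) := by
  rw [pderivIter, pderivHom.eq_2,
    dif_pos (show ((j.castSucc : Fin (n+1)) : ℕ) < n from j.isLt)]
  rfl

lemma down_pderivIter_last {n : ℕ} (f : IterLaurent A (n+1)) :
    (pderivIter A (Fin.last n) f).down = hahnDerivHom (IterLaurent A n) f.down := by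
  rw [pderivIter, pderivHom.eq_2,
    dif_neg (show ¬((Fin.last n : Fin (n+1)) : ℕ) < n from lt_irrefl n)]
  rfl

lemma down_pderivIter_castSucc_up_single {n : ℕ} (j : Fin n) (c : ℤ) (x : IterLaurent A n) :
    (pderivIter A j.castSucc (up (HahnSeries.single c x))).down =
      HahnSeries.single c (pderivIter A j x) := by
  rw [down_pderivIter_castSucc, down_up]
  exact HahnSeries.map_single (pderivHom A j).toZeroHom

lemma hahnDerivHom_coeff_neg_one {B : Type} [CommRing B] (f : LaurentSeries B) :
    (hahnDerivHom B f).coeff (-1) = 0 :=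
  zero_smul ℤ (f.coeff 0)

lemma iterRes_pderivIter : ∀ {n : ℕ} (j : Fin n) (f : IterLaurent A n),
    iterRes A (pderivIter A j f) = 0
  | 0, j, _ => j.elim0
  | n+1, j, f => by
    rw [iterRes_succ]
    rcases Fin.eq_castSucc_or_eq_last j with ⟨i, rfl⟩ | rfl
    · rw [down_pderivIter_castSucc, HahnSeries.map_coeff]
      exact iterRes_pderivIter i _
    · rw [down_pderivIter_last, hahnDerivHom_coeff_neg_one]
      exact iterCoeff_zero _

end Derivative

section Antiderivative

variable {B : Type} [CommRing B] [Module ℚ B]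

/-- `Σ aₖ tᵏ ↦ Σ aₖ tᵏ⁺¹/(k+1)`. Since `(0 : ℚ)⁻¹ = 0`, the term `a₋₁ t⁻¹`, which has no
antiderivative, is dropped. -/
def hahnAntideriv (f : LaurentSeries B) : LaurentSeries B where
  coeff k := (k : ℚ)⁻¹ • f.coeff (k - 1)
  isPWO_support' := by
    refine (f.isPWO_support.image_of_monotone (f := fun k : ℤ => k + 1)
      fun _ _ h => Int.add_le_add_right h 1).mono fun k hk => ⟨k - 1, fun h0 => hk ?_, by ring⟩
    simp only [h0, smul_zero]

lemma hahnDerivHom_hahnAntideriv (f : LaurentSeries B) :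
    hahnDerivHom B (hahnAntideriv f) = f - HahnSeries.single (-1) (f.coeff (-1)) := by
  ext k
  change (k + 1) • ((((k + 1 : ℤ) : ℚ))⁻¹ • f.coeff (k + 1 - 1)) = _
  rw [HahnSeries.coeff_sub, HahnSeries.coeff_single, add_sub_cancel_right]
  by_cases hk : k = -1
  · simp [hk]
  · rw [if_neg hk, sub_zero, ← Int.cast_smul_eq_zsmul ℚ, smul_smul,
      mul_inv_cancel₀ (by exact_mod_cast (show k + 1 ≠ 0 by omega)), one_smul]

end Antiderivative

instance iterLaurentAlgebraRat (A : Type) [CommRing A] [Algebra ℚ A] (n : ℕ) :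
    Algebra ℚ (IterLaurent A n) :=
  ((iterC A n).comp (algebraMap ℚ A)).toAlgebra

lemma exists_sum_pderivIter_of_iterRes_eq_zero {A : Type} [CommRing A] [Algebra ℚ A] {n : ℕ}
    (f : IterLaurent A n) (hf : iterRes A f = 0) :
    ∃ h : Fin n → IterLaurent A n, f = ∑ j : Fin n, pderivIter A j (h j) := by
  induction n with
  | zero => exact ⟨Fin.elim0, hf⟩
  | succ n ih =>
    obtain ⟨h, hh⟩ := ih _ hf
    refine ⟨Fin.snoc (α := fun _ => IterLaurent A (n+1))
      (fun j => up (HahnSeries.single (-1) (h j))) (up (hahnAntideriv f.down)),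
      (downEquiv n).injective ?_⟩
    simp only [map_add, map_sum, Fin.sum_univ_castSucc, Fin.snoc_castSucc, Fin.snoc_last,
      downEquiv_apply, down_pderivIter_castSucc_up_single, down_pderivIter_last, down_up,
      hahnDerivHom_hahnAntideriv]
    have hsum : ∑ j, HahnSeries.single (-1 : ℤ) (pderivIter A j (h j)) =
        HahnSeries.single (-1) (f.down.coeff (-1)) := by
      rw [show f.down.coeff (-1) = _ from hh]
      exact (map_sum (HahnSeries.single.addMonoidHom (-1)) _ _).symm
    rw [hsum, add_sub_cancel]

theorem statement7_general (n : ℕ) (A : Type) [CommRing A] [Algebra ℚ A] :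
    Function.Surjective (fun f : IterLaurent A n => iterRes A f) ∧
    ∀ f : IterLaurent A n,
      iterRes A f = 0 ↔
        ∃ h : Fin n → IterLaurent A n, f = ∑ j : Fin n, pderivIter A j (h j) := by
  refine ⟨iterRes_surjective n, fun f => ⟨exists_sum_pderivIter_of_iterRes_eq_zero f, ?_⟩⟩
  rintro ⟨h, rfl⟩
  rw [iterRes_sum]
  exact Finset.sum_eq_zero fun j _ => iterRes_pderivIter j (h j)

/-- For `n ≥ 1` and a commutative ℚ-algebra `A`, the residue map
`res : Lⁿ(A) → A`, `f ↦ coeff_{(−1,…,−1)}(f)`, is surjective and its kernel consists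
exactly of the sums `Σ_{j=1}^n ∂hⱼ/∂tⱼ`. -/
theorem statement7 (n : ℕ) (hn : 1 ≤ n) (A : Type) [CommRing A] [Algebra ℚ A] :
    Function.Surjective (fun f : IterLaurent A n => iterRes A f) ∧
    ∀ f : IterLaurent A n,
      iterRes A f = 0 ↔
        ∃ h : Fin n → IterLaurent A n, f = ∑ j : Fin n, pderivIter A j (h j) :=
  statement7_general n A
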